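/- arXiv:2512.10024 — 11 statements merged into one kernel-verified Lean document; each statement's English description precedes it below -/
import Mathlib

section
/- For all finite words X and Y over an alphabet, the palindromic length of X is at most the palindromic length of Y plus the palindromic length of XY, and likewise the palindromic length of Y is at most the palindromic length of X plus the palindromic length of XY. -/
def Pal {α : Type*} (w : List α) : Prop := w.reverse = w

noncomputable def palLen {α : Type*} (w : List α) : ℕ :=
  sInf {k | ∃ l : List (List α), l.length = k ∧ (∀ p ∈ l, Pal p) ∧ l.flatten = w}

lemma palLen_le {α : Type*} {w : List α} {l : List (List α)}
    (h1 : ∀ p ∈ l, Pal p) (h2 : l.flatten = w) : palLen w ≤ l.length :=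
  Nat.sInf_le ⟨l, rfl, h1, h2⟩

lemma flatten_map_singleton {α : Type*} (w : List α) :
    (w.map (fun a => [a])).flatten = w := by
  induction w <;> simp [*]

lemma exists_decomp {α : Type*} (w : List α) :
    ∃ l : List (List α), l.length = palLen w ∧ (∀ p ∈ l, Pal p) ∧ l.flatten = w := by
  have hne : {k | ∃ l : List (List α), l.length = k ∧ (∀ p ∈ l, Pal p) ∧ l.flatten = w}.Nonempty :=
    ⟨w.length, w.map (fun a => [a]), by simp, by intro p hp; simp at hp; obtain ⟨a, _, rfl⟩ := hp; rfl,
      flatten_map_singleton w⟩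
  obtain ⟨l, h1, h2, h3⟩ := Nat.sInf_mem hne
  exact ⟨l, h1, h2, h3⟩

lemma flatten_filter_ne_nil {α : Type*} (l : List (List α)) :
    (l.filter (fun p => !p.isEmpty)).flatten = l.flatten := by
  induction l with
  | nil => rfl
  | cons a t ih => cases a <;> simp [List.filter, ih]

lemma exists_decomp' {α : Type*} (w : List α) :
    ∃ l : List (List α), l.length = palLen w ∧ (∀ p ∈ l, Pal p) ∧ l.flatten = w ∧
      ∀ p ∈ l, p ≠ [] := by
  obtain ⟨l, h1, h2, h3⟩ := exists_decomp w
  refine ⟨l.filter (fun p => !p.isEmpty), ?_, ?_, ?_, ?_⟩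
  · have hle : (l.filter (fun p => !p.isEmpty)).length ≤ l.length := List.length_filter_le _ _
    have hge : palLen w ≤ (l.filter (fun p => !p.isEmpty)).length :=
      palLen_le (fun p hp => h2 p (List.mem_of_mem_filter hp))
        (by rw [flatten_filter_ne_nil, h3])
    omega
  · exact fun p hp => h2 p (List.mem_of_mem_filter hp)
  · rw [flatten_filter_ne_nil, h3]
  · intro p hp
    have := (List.mem_filter.mp hp).2
    simpa using this

lemma palLen_nil {α : Type*} : palLen ([] : List α) = 0 :=
  Nat.eq_zero_of_le_zero (palLen_le (l := []) (by simp) rfl)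

lemma word_eq_aux {α : Type*} : ∀ n (z s : List α), z.length ≤ n →
    s ++ z = z ++ s.reverse → ∃ p q : List α, Pal p ∧ Pal q ∧ s = p ++ q := by
  intro n
  induction n with
  | zero =>
    intro z s hz h
    have : z = [] := List.eq_nil_of_length_eq_zero (Nat.le_zero.mp hz)
    subst this
    simp at h
    exact ⟨s, [], h.symm, rfl, by simp⟩
  | succ n ih =>
    intro z s hz h
    rcases eq_or_ne s [] with rfl | hs
    · exact ⟨[], [], rfl, rfl, rfl⟩
    rcases le_or_gt s.length z.length with hle | hlt
    · -- s is a prefix of z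
      have hpz : s <+: s ++ z := List.prefix_append s z
      have hpz' : s <+: z ++ s.reverse := h ▸ hpz
      have hzz : z <+: z ++ s.reverse := List.prefix_append z s.reverse
      have hsz : s <+: z := List.prefix_of_prefix_length_le hpz' hzz hle
      obtain ⟨t, rfl⟩ := hsz
      have h' : s ++ t = t ++ s.reverse := by
        have := h
        rw [← List.append_assoc] at this
        -- s ++ (s ++ t) = (s ++ t) ++ s.reverse
        have h2 : s ++ (s ++ t) = s ++ (t ++ s.reverse) := by
          rw [h]; simp
        exact List.append_cancel_left h2
      have htlen : t.length ≤ n := by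
        have := @List.length_append _ s t
        have hs' : 0 < s.length := List.length_pos_iff.mpr hs
        omega
      exact ih t s htlen h'
    · -- z is a prefix of s
      have hzp : z <+: z ++ s.reverse := List.prefix_append z s.reverse
      have hzp' : z <+: s ++ z := h ▸ hzp
      have hsp : s <+: s ++ z := List.prefix_append s z
      have hzs : z <+: s := List.prefix_of_prefix_length_le hzp' hsp (le_of_lt hlt)
      obtain ⟨r, rfl⟩ := hzs
      -- (z ++ r) ++ z = z ++ (z ++ r).reverse = z ++ r.reverse ++ z.reverse
      have h' : r ++ z = r.reverse ++ z.reverse := by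
        have h2 : z ++ (r ++ z) = z ++ (r.reverse ++ z.reverse) := by
          have := h
          simp only [List.reverse_append, List.append_assoc] at this ⊢
          exact this
        exact List.append_cancel_left h2
      have := List.append_inj h' (by simp)
      exact ⟨z, r, this.2.symm, this.1.symm, rfl⟩

lemma palLen_dropPal_aux {α : Type*} : ∀ n, ∀ u Q : List α, (u ++ Q).length ≤ n →
    Pal Q → palLen u ≤ palLen (u ++ Q) + 1 := by
  intro n
  induction n with
  | zero =>
    intro u Q hlen _
    have : u = [] := by
      have := @List.length_append _ u Q
      have : u.length = 0 := by omega
      exact List.eq_nil_of_length_eq_zero this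
    subst this
    simp [palLen_nil]
  | succ n ih =>
    intro u Q hlen hQ
    obtain ⟨l, hl1, hl2, hl3, hl4⟩ := exists_decomp' (u ++ Q)
    rcases eq_or_ne l [] with rfl | hlne
    · -- u ++ Q = [], so u = []
      simp at hl3
      obtain ⟨rfl, rfl⟩ := hl3
      simp [palLen_nil]
    · obtain ⟨l', Pk, rfl⟩ := (List.eq_nil_or_concat l).resolve_left hlne
      have hPk : Pal Pk := hl2 Pk (by simp)
      have hPkne : Pk ≠ [] := hl4 Pk (by simp)
      have hF : l'.flatten ++ Pk = u ++ Q := by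
        simpa using hl3
      have hk : l'.length + 1 = palLen (u ++ Q) := by simpa using hl1
      have hl2' : ∀ p ∈ l', Pal p := fun p hp => hl2 p (by simp [hp])
      rcases List.append_eq_append_iff.mp hF.symm with ⟨a', ha1, ha2⟩ | ⟨c', hc1, hc2⟩
      · -- l'.flatten = u ++ a', Q = a' ++ Pk
        have heq : a' ++ Pk = Pk ++ a'.reverse := by
          have h1 : (a' ++ Pk).reverse = a' ++ Pk := by rw [← ha2]; exact hQ
          rw [List.reverse_append, hPk] at h1
          exact h1.symm
        obtain ⟨p, q, hp, hq, rfl⟩ := word_eq_aux Pk.length Pk a' le_rfl heq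
        have hupq : u ++ (p ++ q) = l'.flatten := ha1.symm
        have hlen1 : (u ++ (p ++ q)).length ≤ n := by
          have e1 := congrArg List.length hF
          have hs' : 0 < Pk.length := List.length_pos_iff.mpr hPkne
          have e3 := congrArg List.length hupq
          simp only [List.length_append] at e1 e3 hlen ⊢
          omega
        have hlen2 : ((u ++ p) ++ q).length ≤ n := by simpa [List.append_assoc] using hlen1
        have hlen3 : (u ++ p).length ≤ n := by
          simp at hlen1 ⊢
          omega
        have step1 : palLen (u ++ p) ≤ palLen ((u ++ p) ++ q) + 1 := ih (u ++ p) q hlen2 hq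
        have step2 : palLen u ≤ palLen (u ++ p) + 1 := ih u p hlen3 hp
        have hupq' : palLen ((u ++ p) ++ q) ≤ l'.length :=
          palLen_le hl2' (by rw [← hupq, List.append_assoc])
        omega
      · -- u = l'.flatten ++ c', Pk = c' ++ Q
        have heq : c' ++ Q = Q ++ c'.reverse := by
          have h1 : (c' ++ Q).reverse = c' ++ Q := by rw [← hc2]; exact hPk
          rw [List.reverse_append, hQ] at h1
          exact h1.symm
        obtain ⟨p, q, hp, hq, rfl⟩ := word_eq_aux Q.length Q c' le_rfl heq
        have hdec : palLen u ≤ (l' ++ [p, q]).length := by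
          apply palLen_le
          · intro r hr
            simp at hr
            rcases hr with hr | rfl | rfl
            · exact hl2' r hr
            · exact hp
            · exact hq
          · rw [hc1]; simp
        simp at hdec
        omega

lemma palLen_dropPal {α : Type*} (u Q : List α) (hQ : Pal Q) :
    palLen u ≤ palLen (u ++ Q) + 1 :=
  palLen_dropPal_aux (u ++ Q).length u Q le_rfl hQ

lemma palLen_le_append_flatten {α : Type*} (u : List α) (l : List (List α))
    (hl : ∀ p ∈ l, Pal p) : palLen u ≤ palLen (u ++ l.flatten) + l.length := by
  induction l using List.reverseRecOn with
  | nil => simp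
  | append_singleton l' Q ih =>
    have hQ : Pal Q := hl Q (by simp)
    have ih' := ih (fun p hp => hl p (by simp [hp]))
    have step : palLen (u ++ l'.flatten) ≤ palLen ((u ++ l'.flatten) ++ Q) + 1 :=
      palLen_dropPal _ _ hQ
    have : (u ++ l'.flatten) ++ Q = u ++ (l' ++ [Q]).flatten := by simp
    rw [this] at step
    simp only [List.length_append, List.length_singleton]
    omega

lemma palLen_left_le {α : Type*} (X Y : List α) :
    palLen X ≤ palLen (X ++ Y) + palLen Y := by
  obtain ⟨l, h1, h2, h3⟩ := exists_decomp Y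
  have := palLen_le_append_flatten X l h2
  rw [h3, h1] at this
  exact this

lemma palLen_reverse_le {α : Type*} (w : List α) : palLen w.reverse ≤ palLen w := by
  obtain ⟨l, h1, h2, h3⟩ := exists_decomp w
  have : ((l.reverse.map List.reverse)).flatten = w.reverse := by
    rw [← h3]
    simp [List.reverse_flatten]
  refine le_trans (palLen_le ?_ this) (by simp [h1])
  intro p hp
  rw [List.mem_map] at hp
  obtain ⟨a, ha, rfl⟩ := hp
  have := h2 a (List.mem_reverse.mp ha)
  show a.reverse.reverse = a.reverse
  rw [List.reverse_reverse]
  exact this.symm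

lemma palLen_reverse {α : Type*} (w : List α) : palLen w.reverse = palLen w := by
  refine le_antisymm (palLen_reverse_le w) ?_
  have := palLen_reverse_le w.reverse
  simpa using this

theorem stmt0 {α : Type*} (X Y : List α) :
    palLen X ≤ palLen Y + palLen (X ++ Y) ∧
    palLen Y ≤ palLen X + palLen (X ++ Y) := by
  constructor
  · have := palLen_left_le X Y
    omega
  · have h := palLen_left_le Y.reverse X.reverse
    rw [palLen_reverse, ← List.reverse_append, palLen_reverse, palLen_reverse] at h
    omega
end

section
/- If P = QX (or P = XQ) where P and Q are palindromes and X is a word, then X is a concatenation of at most two palindromes. -/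
private lemma conjAux {α : Type*} : ∀ (n : ℕ) (z x y : List α), z.length ≤ n →
    x ++ z = z ++ y → ∃ u v, x = u ++ v ∧ y = v ++ u := by
  intro n
  induction n with
  | zero =>
    intro z x y hlen heq
    have hz : z = [] := List.eq_nil_of_length_eq_zero (Nat.le_zero.mp hlen)
    subst hz
    exact ⟨x, [], by simp_all, by simpa using heq.symm⟩
  | succ n ih =>
    intro z x y hlen heq
    rcases eq_or_ne x [] with hx | hx
    · subst hx
      refine ⟨[], [], rfl, ?_⟩
      have : z ++ [] = z ++ y := by simpa using heq
      simpa using (List.append_cancel_left this).symm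
    · rcases le_or_gt z.length x.length with hle | hlt
      · -- z is a prefix of x
        have hzp : z <+: x := by
          have h1 : z <+: x ++ z := ⟨y, heq.symm⟩
          exact List.prefix_of_prefix_length_le h1 (List.prefix_append x z) hle
        obtain ⟨w, hw⟩ := hzp
        refine ⟨z, w, hw.symm, ?_⟩
        have : z ++ (w ++ z) = z ++ y := by
          rw [← heq, ← hw]; simp
        exact (List.append_cancel_left this).symm
      · -- x is a proper prefix of z
        have hxp : x <+: z := by
          have h1 : x <+: z ++ y := ⟨z, by rw [← heq]⟩
          exact List.prefix_of_prefix_length_le h1 (List.prefix_append z y) hlt.le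
        obtain ⟨z', hz'⟩ := hxp
        have heq' : x ++ z' = z' ++ y := by
          have : x ++ (x ++ z') = x ++ (z' ++ y) := by
            rw [hz', heq, ← hz', List.append_assoc]
          exact List.append_cancel_left this
        have hxpos : 0 < x.length := List.length_pos_iff.mpr hx
        have hlen' : z'.length ≤ n := by
          have : x.length + z'.length = z.length := by
            rw [← hz']; simp
          omega
        exact ih z' x y hlen' heq'

private lemma conj {α : Type*} (z x y : List α) (heq : x ++ z = z ++ y) :
    ∃ u v, x = u ++ v ∧ y = v ++ u :=
  conjAux z.length z x y le_rfl heq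

theorem stmt1 {α : Type*} (P Q X : List α) (hP : Pal P) (hQ : Pal Q)
    (h : P = Q ++ X ∨ P = X ++ Q) :
    ∃ S T : List α, Pal S ∧ Pal T ∧ X = S ++ T := by
  unfold Pal at *
  rcases h with h | h
  · have key : X.reverse ++ Q = Q ++ X := by
      have h1 : P.reverse = X.reverse ++ Q.reverse := by rw [h]; simp
      rw [hP, hQ] at h1
      rw [← h1, ← h]
    obtain ⟨u, v, hu, hv⟩ := conj Q _ _ key
    -- X.reverse = u ++ v, X = v ++ u
    have hrev : u.reverse ++ v.reverse = u ++ v := by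
      have : X.reverse = (v ++ u).reverse := by rw [hv]
      rw [hu] at this
      simpa using this.symm
    have hlen : u.reverse.length = u.length := by simp
    obtain ⟨hu2, hv2⟩ := List.append_inj hrev hlen
    exact ⟨v, u, hv2, hu2, hv⟩
  · have key : X ++ Q = Q ++ X.reverse := by
      have h1 : P.reverse = Q.reverse ++ X.reverse := by rw [h]; simp
      rw [hP, hQ] at h1
      rw [← h1, ← h]
    obtain ⟨u, v, hu, hv⟩ := conj Q _ _ key
    -- X = u ++ v, X.reverse = v ++ u
    have hrev : v.reverse ++ u.reverse = v ++ u := by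
      have : X.reverse = (u ++ v).reverse := by rw [hu]
      rw [hv] at this
      simpa using this.symm
    have hlen : v.reverse.length = v.length := by simp
    obtain ⟨hv2, hu2⟩ := List.append_inj hrev hlen
    exact ⟨u, v, hu2, hv2, hu⟩
end

section
/- If PX = QY where P and Q are palindromes and X, Y are words, then either X = STY for some palindromes S, T, or Y = STX for some palindromes S, T. -/
theorem key {α : Type*} : ∀ n (Q R : List α), Q.length = n →
    Q ++ R = R.reverse ++ Q → ∃ S T : List α, Pal S ∧ Pal T ∧ R = S ++ T := by
  intro n
  induction n using Nat.strong_induction_on with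
  | _ n ih =>
    intro Q R hn h
    rcases List.append_eq_append_iff.mp h with ⟨a, ha1, ha2⟩ | ⟨c, hc1, hc2⟩

    · -- R.reverse = Q ++ a, R = a ++ Q
      have hrev : R.reverse = Q.reverse.reverse ++ a.reverse.reverse := by
        simp [ha1]
      rw [ha2] at hrev
      rw [List.reverse_append] at hrev
      -- hrev : Q.reverse ++ a.reverse = Q.reverse.reverse ++ a.reverse.reverse
      have hlen : Q.reverse.length = Q.reverse.reverse.length := by simp
      obtain ⟨h1, h2⟩ := List.append_inj hrev hlen
      exact ⟨a, Q, by simpa [Pal] using h2, by simpa [Pal] using h1, ha2⟩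
    · -- Q = R.reverse ++ c, Q = c ++ R
      rcases eq_or_ne R [] with rfl | hR
      · exact ⟨[], [], by simp [Pal], by simp [Pal], by simp⟩
      · have heq : c ++ R = R.reverse ++ c := by rw [← hc2, hc1]
        have hlt : c.length < n := by
          have : Q.length = R.length + c.length := by simp [hc1]
          have hRpos : 0 < R.length := List.length_pos_iff.mpr hR
          omega
        exact ih c.length hlt c R rfl heq

theorem stmt2 {α : Type*} (P Q X Y : List α) (hP : Pal P) (hQ : Pal Q)
    (h : P ++ X = Q ++ Y) :
    (∃ S T : List α, Pal S ∧ Pal T ∧ X = S ++ T ++ Y) ∨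
    (∃ S T : List α, Pal S ∧ Pal T ∧ Y = S ++ T ++ X) := by
  rcases List.append_eq_append_iff.mp h with ⟨a, ha1, ha2⟩ | ⟨c, hc1, hc2⟩
  · -- Q = P ++ a, X = a ++ Y
    left
    have heq : P ++ a = a.reverse ++ P := by
      have := hQ
      rw [ha1] at this
      unfold Pal at this
      rw [List.reverse_append, hP] at this
      exact this.symm
    obtain ⟨S, T, hS, hT, hST⟩ := key P.length P a rfl heq
    exact ⟨S, T, hS, hT, by rw [ha2, hST, List.append_assoc]⟩
  · -- P = Q ++ c, Y = c ++ X
    right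
    have heq : Q ++ c = c.reverse ++ Q := by
      have := hP
      rw [hc1] at this
      unfold Pal at this
      rw [List.reverse_append, hQ] at this
      exact this.symm
    obtain ⟨S, T, hS, hT, hST⟩ := key Q.length Q c rfl heq
    exact ⟨S, T, hS, hT, by rw [hc2, hST, List.append_assoc]⟩
end

section
/- If XY = ZP for a palindrome P and words X, Y, Z, then one of the following holds: (1) Z = XA and Y = AP for some word A; (2) X = ZA and Y = P'·reverse(A) for some word A and palindrome P'; (3) X = Z·reverse(Y)·P' for some palindrome P'. -/
theorem stmt3 {α : Type*} (X Y Z P : List α) (hP : Pal P)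
    (h : X ++ Y = Z ++ P) :
    (∃ A : List α, Z = X ++ A ∧ Y = A ++ P) ∨
    (∃ A P' : List α, Pal P' ∧ X = Z ++ A ∧ Y = P' ++ A.reverse) ∨
    (∃ P' : List α, Pal P' ∧ X = Z ++ Y.reverse ++ P') := by
  rcases List.append_eq_append_iff.mp h with ⟨A, hZ, hY⟩ | ⟨A, hX, hPA⟩
  · exact Or.inl ⟨A, hZ, hY⟩
  · have hrev : Y.reverse ++ A.reverse = A ++ Y := by
      have : (A ++ Y).reverse = A ++ Y := hPA ▸ hP
      rwa [List.reverse_append] at this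
    rcases List.append_eq_append_iff.mp hrev with ⟨B, hA, hAr⟩ | ⟨B, hYr, hY⟩
    · -- A = Y.reverse ++ B, A.reverse = B ++ Y
      refine Or.inr (Or.inr ⟨B, ?_, by rw [hX, hA, List.append_assoc]⟩)
      have : B.reverse ++ Y.reverse.reverse = B ++ Y := by
        rw [← List.reverse_append, ← hA, hAr]
      rw [List.reverse_reverse] at this
      exact List.append_cancel_right this
    · -- Y.reverse = A ++ B, Y = B ++ A.reverse
      have hY2 : Y = B.reverse ++ A.reverse := by
        rw [← List.reverse_append, ← hYr, List.reverse_reverse]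
      have hB : Pal B := List.append_cancel_right (hY.symm.trans hY2) |>.symm
      exact Or.inr (Or.inl ⟨A, B, hB, hX, hY⟩)
end

section
/- If PXY = QZ where P and Q are palindromes and X, Y, Z are words, then one of the following six cases holds, for some palindromes S, T and possibly a word X': (1) Z = STXY; (2) X = STX' and Z = X'Y; (3) Y = S·reverse(X)·TZ; (4) X = X'S and Y = reverse(X')·T·Z; (5) X = SX' and Y = T·reverse(X')·Z; (6) X = SX'T and Y = reverse(X')·Z. -/
lemma midPal {α : Type*} {u b : List α} (h : Pal (u ++ b ++ u.reverse)) : Pal b := by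
  unfold Pal at *
  rw [List.reverse_append, List.reverse_append, List.reverse_reverse] at h
  have h2 : u ++ (b.reverse ++ u.reverse) = u ++ (b ++ u.reverse) := by
    simpa [List.append_assoc] using h
  have h3 := List.append_cancel_left h2
  exact List.append_cancel_right h3

lemma lemA {α : Type*} : ∀ n (Q P U : List α), Q.length ≤ n → Pal P → Pal Q →
    Q = P ++ U → ∃ S T : List α, Pal S ∧ Pal T ∧ U = S ++ T := by
  intro n
  induction n with
  | zero =>
    intro Q P U hn hP hQ h
    exact ⟨[], [], rfl, rfl, by
      have : Q = [] := List.length_eq_zero_iff.mp (Nat.le_zero.mp hn)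
      subst this
      have := (List.append_eq_nil_iff.mp h.symm).2
      simp [this]⟩
  | succ n ih =>
    intro Q P U hn hP hQ h
    rcases eq_or_ne U [] with rfl | hU
    · exact ⟨[], [], rfl, rfl, by simp⟩
    have key : U.reverse ++ P = P ++ U := by
      have : Q.reverse = U.reverse ++ P := by rw [h, List.reverse_append, hP]
      rw [hQ, h] at this
      exact this.symm
    rcases List.append_eq_append_iff.mp key with ⟨a, h1, h2⟩ | ⟨c, h1, h2⟩
    · -- h1 : P = U.reverse ++ a, h2 : P = a ++ U
      have ha : Pal a := by
        have hr : P.reverse = U.reverse ++ a.reverse := by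
          rw [h2, List.reverse_append]
        rw [hP, h1] at hr
        exact (List.append_cancel_left hr).symm
      have hlen : P.length ≤ n := by
        have hQlen : Q.length = P.length + U.length := by
          rw [h, List.length_append]
        have hUpos : 0 < U.length := List.length_pos_iff.mpr hU
        omega
      exact ih P a U hlen ha hP h2
    · -- h1 : U.reverse = P ++ c, h2 : U = c ++ P
      have hc : Pal c := by
        have hr : U = c.reverse ++ P := by
          have := congrArg List.reverse h1
          rw [List.reverse_reverse, List.reverse_append, hP] at this
          exact this
        rw [h2] at hr
        exact (List.append_cancel_right hr).symm
      exact ⟨c, P, hc, hP, h2⟩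

/-- If S, T are palindromes and X ++ V = S ++ T, one of the four middle cases holds. -/
lemma lemB {α : Type*} {X V S T : List α} (hS : Pal S) (hT : Pal T)
    (h : X ++ V = S ++ T) :
    (∃ S' T' : List α, Pal S' ∧ Pal T' ∧ V = S' ++ X.reverse ++ T') ∨
    (∃ S' T' X' : List α, Pal S' ∧ Pal T' ∧ X = X' ++ S' ∧ V = X'.reverse ++ T') ∨
    (∃ S' T' X' : List α, Pal S' ∧ Pal T' ∧ X = S' ++ X' ∧ V = T' ++ X'.reverse) ∨
    (∃ S' T' X' : List α, Pal S' ∧ Pal T' ∧ X = S' ++ X' ++ T' ∧ V = X'.reverse) := by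
  rcases List.append_eq_append_iff.mp h with ⟨a, h1, h2⟩ | ⟨c, h1, h2⟩
  · -- h1 : S = X ++ a, h2 : V = a ++ T
    have key : X ++ a = a.reverse ++ X.reverse := by
      rw [← List.reverse_append, ← h1, hS, h1]
    rcases List.append_eq_append_iff.mp key with ⟨b, k1, k2⟩ | ⟨c, k1, k2⟩
    · -- k1 : a.reverse = X ++ b, k2 : a = b ++ X.reverse
      have hb : Pal b := by
        apply midPal (u := X)
        rw [List.append_assoc, ← k2, ← h1]
        exact hS
      exact Or.inl ⟨b, T, hb, hT, by rw [h2, k2, List.append_assoc]⟩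
    · -- k1 : X = a.reverse ++ c, k2 : X.reverse = c ++ a
      have hc : Pal c := by
        apply midPal (u := a.reverse)
        rw [List.reverse_reverse, ← k1, ← h1]
        exact hS
      exact Or.inr (Or.inl ⟨c, T, a.reverse, hc, hT, k1, by
        rw [h2, List.reverse_reverse]⟩)
  · -- h1 : X = S ++ c, h2 : T = c ++ V
    have key : c ++ V = V.reverse ++ c.reverse := by
      rw [← List.reverse_append, ← h2, hT, h2]
    rcases List.append_eq_append_iff.mp key with ⟨b, k1, k2⟩ | ⟨d, k1, k2⟩
    · -- k1 : V.reverse = c ++ b, k2 : V = b ++ c.reverse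
      have hb : Pal b := by
        apply midPal (u := c)
        rw [List.append_assoc, ← k2, ← h2]
        exact hT
      exact Or.inr (Or.inr (Or.inl ⟨S, b, c, hS, hb, h1, k2⟩))
    · -- k1 : c = V.reverse ++ d, k2 : c.reverse = d ++ V
      have hd : Pal d := by
        apply midPal (u := V.reverse)
        rw [List.reverse_reverse, ← k1, ← h2]
        exact hT
      exact Or.inr (Or.inr (Or.inr ⟨S, d, V.reverse, hS, hd, by rw [h1, k1, List.append_assoc], by
        rw [List.reverse_reverse]⟩))

theorem stmt4 {α : Type*} (P Q X Y Z : List α) (hP : Pal P) (hQ : Pal Q)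
    (h : P ++ X ++ Y = Q ++ Z) :
    (∃ S T : List α, Pal S ∧ Pal T ∧ Z = S ++ T ++ X ++ Y) ∨
    (∃ S T X' : List α, Pal S ∧ Pal T ∧ X = S ++ T ++ X' ∧ Z = X' ++ Y) ∨
    (∃ S T : List α, Pal S ∧ Pal T ∧ Y = S ++ X.reverse ++ T ++ Z) ∨
    (∃ S T X' : List α, Pal S ∧ Pal T ∧ X = X' ++ S ∧ Y = X'.reverse ++ T ++ Z) ∨
    (∃ S T X' : List α, Pal S ∧ Pal T ∧ X = S ++ X' ∧ Y = T ++ X'.reverse ++ Z) ∨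
    (∃ S T X' : List α, Pal S ∧ Pal T ∧ X = S ++ X' ++ T ∧ Y = X'.reverse ++ Z) := by
  have h' : P ++ (X ++ Y) = Q ++ Z := by rw [← List.append_assoc]; exact h
  rcases List.append_eq_append_iff.mp h' with ⟨a, h1, h2⟩ | ⟨c, h1, h2⟩
  · -- h1 : Q = P ++ a, h2 : X ++ Y = a ++ Z
    obtain ⟨S, T, hS, hT, hST⟩ := lemA Q.length Q P a le_rfl hP hQ h1
    -- a = S ++ T ; X ++ Y = a ++ Z
    rcases List.append_eq_append_iff.mp h2 with ⟨b, k1, k2⟩ | ⟨d, k1, k2⟩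
    · -- k1 : a = X ++ b, k2 : Y = b ++ Z
      -- then S ++ T = X ++ b, apply lemB with V := b
      have hXb : X ++ b = S ++ T := by rw [← k1, hST]
      rcases lemB hS hT hXb with ⟨S', T', hS', hT', hb⟩ |
        ⟨S', T', X', hS', hT', hx, hb⟩ | ⟨S', T', X', hS', hT', hx, hb⟩ |
        ⟨S', T', X', hS', hT', hx, hb⟩
      · exact Or.inr (Or.inr (Or.inl ⟨S', T', hS', hT', by
          rw [k2, hb, List.append_assoc, List.append_assoc]⟩))
      · exact Or.inr (Or.inr (Or.inr (Or.inl ⟨S', T', X', hS', hT', hx, by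
          rw [k2, hb, List.append_assoc]⟩)))
      · exact Or.inr (Or.inr (Or.inr (Or.inr (Or.inl ⟨S', T', X', hS', hT', hx, by
          rw [k2, hb, List.append_assoc]⟩))))
      · exact Or.inr (Or.inr (Or.inr (Or.inr (Or.inr ⟨S', T', X', hS', hT', hx, by
          rw [k2, hb]⟩))))
    · -- k1 : X = a ++ d, k2 : Z = d ++ Y
      exact Or.inr (Or.inl ⟨S, T, d, hS, hT, by rw [k1, hST], k2⟩)
  · -- h1 : P = Q ++ c, h2 : Z = c ++ (X ++ Y)
    obtain ⟨S, T, hS, hT, hST⟩ := lemA P.length P Q c le_rfl hQ hP h1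
    exact Or.inl ⟨S, T, hS, hT, by rw [h2, hST]; simp [List.append_assoc]⟩
end

section
/- If XY = PQ where P and Q are palindromes and X, Y are words, then one of the following holds: (1) P = X·P'·reverse(X) and Y = P'·reverse(X)·Q for some palindrome P'; (2) X = ZP' and Y = reverse(Z)·Q where P = Z·P'·reverse(Z) for a palindrome P' and word Z; (3) X = PZ and Y = Q'·reverse(Z) where Q = Z·Q'·reverse(Z) for a palindrome Q' and word Z; (4) X = P·reverse(Y)·Q' where Q = reverse(Y)·Q'·Y for a palindrome Q'. -/
lemma pal_pref {α : Type*} (P X R : List α) (hP : Pal P) (h : P = X ++ R) :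
    (∃ P' : List α, Pal P' ∧ P = X ++ P' ++ X.reverse ∧ R = P' ++ X.reverse) ∨
    (∃ Z P' : List α, Pal P' ∧ P = Z ++ P' ++ Z.reverse ∧ X = Z ++ P' ∧ R = Z.reverse) := by
  have h2 : P = R.reverse ++ X.reverse := by
    conv_lhs => rw [← hP, h]
    simp
  have key : X ++ R = R.reverse ++ X.reverse := by rw [← h, ← h2]
  by_cases hle : X.length ≤ R.length
  · -- X is a prefix of R.reverse
    have pa : X <+: R.reverse ++ X.reverse := key ▸ List.prefix_append X R
    have hpre : X <+: R.reverse :=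
      List.prefix_of_prefix_length_le pa (List.prefix_append _ _) (by simpa using hle)
    obtain ⟨T, hT⟩ := hpre
    have hR : R = T.reverse ++ X.reverse := by
      have := congrArg List.reverse hT
      simpa using this.symm
    left
    have hcan : T = T.reverse := by
      have e1 : X ++ (T.reverse ++ X.reverse) = X ++ (T ++ X.reverse) := by
        calc X ++ (T.reverse ++ X.reverse) = X ++ R := by rw [hR]
          _ = R.reverse ++ X.reverse := key
          _ = X ++ (T ++ X.reverse) := by rw [← hT]; simp
      exact (List.append_cancel_right (List.append_cancel_left e1)).symm
    refine ⟨T.reverse, ?_, ?_, ?_⟩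
    · show T.reverse.reverse = T.reverse
      rw [List.reverse_reverse]; exact hcan
    · rw [h, hR, List.append_assoc]
    · exact hR
  · push_neg at hle
    have pa : R.reverse <+: X ++ R := key ▸ List.prefix_append _ _
    have hpre : R.reverse <+: X :=
      List.prefix_of_prefix_length_le pa (List.prefix_append _ _) (by simpa using hle.le)
    obtain ⟨T, hT⟩ := hpre
    right
    have hcan : T.reverse = T := by
      have e1 : R.reverse ++ (T ++ R) = R.reverse ++ (T.reverse ++ R) := by
        calc R.reverse ++ (T ++ R) = X ++ R := by rw [← hT]; simp
          _ = R.reverse ++ X.reverse := key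
          _ = R.reverse ++ (T.reverse ++ R) := by
              rw [← hT]; simp
      exact (List.append_cancel_right (List.append_cancel_left e1)).symm
    refine ⟨R.reverse, T, hcan, ?_, hT.symm, by simp⟩
    rw [h, ← hT]; simp

theorem stmt5 {α : Type*} (X Y P Q : List α) (hP : Pal P) (hQ : Pal Q)
    (h : X ++ Y = P ++ Q) :
    (∃ P' : List α, Pal P' ∧ P = X ++ P' ++ X.reverse ∧ Y = P' ++ X.reverse ++ Q) ∨
    (∃ Z P' : List α, Pal P' ∧ P = Z ++ P' ++ Z.reverse ∧ X = Z ++ P' ∧ Y = Z.reverse ++ Q) ∨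
    (∃ Z Q' : List α, Pal Q' ∧ Q = Z ++ Q' ++ Z.reverse ∧ X = P ++ Z ∧ Y = Q' ++ Z.reverse) ∨
    (∃ Q' : List α, Pal Q' ∧ Q = Y.reverse ++ Q' ++ Y ∧ X = P ++ Y.reverse ++ Q') := by
  by_cases hle : X.length ≤ P.length
  · have pa : X <+: P ++ Q := h ▸ List.prefix_append X Y
    have hpre : X <+: P :=
      List.prefix_of_prefix_length_le pa (List.prefix_append _ _) hle
    obtain ⟨R, hR⟩ := hpre
    have hY : Y = R ++ Q := by
      apply List.append_cancel_left (as := X)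
      rw [h, ← hR]; simp
    rcases pal_pref P X R hP hR.symm with ⟨P', h1, h2, h3⟩ | ⟨Z, P', h1, h2, h3, h4⟩
    · exact Or.inl ⟨P', h1, h2, by rw [hY, h3, List.append_assoc]⟩
    · exact Or.inr (Or.inl ⟨Z, P', h1, h2, h3, by rw [hY, h4]⟩)
  · push_neg at hle
    have pa : P <+: X ++ Y := h ▸ List.prefix_append P Q
    have hpre : P <+: X :=
      List.prefix_of_prefix_length_le pa (List.prefix_append _ _) hle.le
    obtain ⟨Z, hZ⟩ := hpre
    have hQ' : Q = Z ++ Y := by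
      apply List.append_cancel_left (as := P)
      rw [← h, ← hZ]; simp
    rcases pal_pref Q Z Y hQ hQ' with ⟨Q', h1, h2, h3⟩ | ⟨Z₀, Q', h1, h2, h3, h4⟩
    · exact Or.inr (Or.inr (Or.inl ⟨Z, Q', h1, h2, hZ.symm, h3⟩))
    · refine Or.inr (Or.inr (Or.inr ⟨Q', h1, ?_, ?_⟩))
      · rw [h4]; simpa using h2
      · rw [← hZ, h3, h4]; simp
end

section
/- If PX = YQ where P and Q are palindromes and X, Y are words, then there exist palindromes S, T and possibly a word Z such that one of the following holds: (1) X = SYT; (2) X = ZS and Y = TZ; (3) X = SZ and Y = ZT; (4) Y = SXT. -/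
lemma pal_split {α : Type*} {U V : List α} (h : Pal (U ++ V)) :
    (∃ C, Pal C ∧ U = V.reverse ++ C ∧ U.reverse = C ++ V) ∨
    (∃ B, Pal B ∧ V = B ++ U.reverse ∧ V.reverse = U ++ B) := by
  unfold Pal at h
  rw [List.reverse_append] at h
  rcases List.append_eq_append_iff.mp h with ⟨C, hU, hUr⟩ | ⟨B, hVr, hV⟩
  · left
    refine ⟨C, ?_, hU, hUr⟩
    have h2 : U.reverse = C.reverse ++ V := by
      rw [hU, List.reverse_append, List.reverse_reverse]
    exact List.append_cancel_right (h2.symm.trans hUr)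
  · right
    refine ⟨B, ?_, hV, hVr⟩
    have h2 : V.reverse = U ++ B.reverse := by
      rw [hV, List.reverse_append, List.reverse_reverse]
    exact List.append_cancel_left (h2.symm.trans hVr)

lemma main_aux {α : Type*} : ∀ n (P Q X Y : List α), P.length + Q.length ≤ n →
    Pal P → Pal Q → P ++ X = Y ++ Q →
    (∃ S T : List α, Pal S ∧ Pal T ∧ X = S ++ Y ++ T) ∨
    (∃ S T Z : List α, Pal S ∧ Pal T ∧ X = Z ++ S ∧ Y = T ++ Z) ∨
    (∃ S T Z : List α, Pal S ∧ Pal T ∧ X = S ++ Z ∧ Y = Z ++ T) ∨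
    (∃ S T : List α, Pal S ∧ Pal T ∧ Y = S ++ X ++ T) := by
  intro n
  induction n with
  | zero =>
    intro P Q X Y hn hP hQ h
    have hP0 : P = [] := by
      have := List.length_eq_zero_iff.mp (by omega : P.length = 0); exact this
    have hQ0 : Q = [] := by
      have := List.length_eq_zero_iff.mp (by omega : Q.length = 0); exact this
    subst hP0; subst hQ0
    simp at h
    exact Or.inl ⟨[], [], rfl, rfl, by simp [h]⟩
  | succ n ih =>
    intro P Q X Y hn hP hQ h
    rcases List.append_eq_append_iff.mp h with ⟨Z, hY, hX⟩ | ⟨A, hPA, hQA⟩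
    · -- Y = P ++ Z, X = Z ++ Q : case 2
      exact Or.inr (Or.inl ⟨Q, P, Z, hQ, hP, hX, hY⟩)
    · -- P = Y ++ A, Q = A ++ X
      by_cases hXY : X = [] ∧ Y = []
      · exact Or.inl ⟨[], [], rfl, rfl, by simp [hXY.1, hXY.2]⟩
      rw [hPA] at hP
      rw [hQA] at hQ
      rcases pal_split hP with ⟨C, hC, hY1, hYr⟩ | ⟨B, hB, hA1, hA1r⟩
      · rcases pal_split hQ with ⟨E, hE, hA2, hA2r⟩ | ⟨D, hD, hX1, hX1r⟩
        · -- Y = A.reverse ++ C, A.reverse = E ++ X : case 4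
          refine Or.inr (Or.inr (Or.inr ⟨E, C, hE, hC, ?_⟩))
          rw [hY1, hA2r, List.append_assoc]
        · -- Y = A.reverse ++ C, X = D ++ A.reverse : case 3
          exact Or.inr (Or.inr (Or.inl ⟨D, C, A.reverse, hD, hC, hX1, hY1⟩))
      · rcases pal_split hQ with ⟨E, hE, hA2, hA2r⟩ | ⟨D, hD, hX1, hX1r⟩
        · -- A = B ++ Y.reverse = X.reverse ++ E
          have hBE : B ++ Y.reverse = X.reverse ++ E := by rw [← hA1, hA2]
          rcases List.append_eq_append_iff.mp hBE with ⟨F, hXr, hYrE⟩ | ⟨G, hBG, hEG⟩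
          · -- X.reverse = B ++ F, Y.reverse = F ++ E : case 2
            refine Or.inr (Or.inl ⟨B, E, F.reverse, hB, hE, ?_, ?_⟩)
            · have : X = (B ++ F).reverse := by rw [← hXr, List.reverse_reverse]
              rw [this, List.reverse_append, hB]
            · have : Y = (F ++ E).reverse := by rw [← hYrE, List.reverse_reverse]
              rw [this, List.reverse_append, hE]
          · -- recurse
            have hlenA1 : A.length = B.length + Y.length := by
              rw [hA1]; simp
            have hlenA2 : A.length = X.length + E.length := by
              rw [hA2]; simp
            have hlenP : P.length = Y.length + A.length := by rw [hPA]; simp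
            have hlenQ : Q.length = A.length + X.length := by rw [hQA]; simp
            have hpos : 1 ≤ X.length + Y.length := by
              rcases List.eq_nil_or_concat X with hx | ⟨_, _, hx⟩
              · have : Y ≠ [] := fun hy => hXY ⟨hx, hy⟩
                have := List.length_pos_iff.mpr this
                omega
              · have : 0 < X.length := by rw [hx]; simp
                omega
            have hrec := ih B E Y.reverse X.reverse (by omega) hB hE hBE
            rcases hrec with ⟨S, T, hS, hT, hEq⟩ | ⟨S, T, Z, hS, hT, h1, h2⟩ |
              ⟨S, T, Z, hS, hT, h1, h2⟩ | ⟨S, T, hS, hT, hEq⟩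
            · -- Y.reverse = S ++ X.reverse ++ T : case 4 Y = T ++ X ++ S
              refine Or.inr (Or.inr (Or.inr ⟨T, S, hT, hS, ?_⟩))
              have hS' : S.reverse = S := hS
              have hT' : T.reverse = T := hT
              have : Y = (S ++ X.reverse ++ T).reverse := by
                rw [← hEq, List.reverse_reverse]
              rw [this]; simp [List.reverse_append, hS', hT']
            · -- Y.reverse = Z ++ S, X.reverse = T ++ Z : case 2
              refine Or.inr (Or.inl ⟨T, S, Z.reverse, hT, hS, ?_, ?_⟩)
              · have : X = (T ++ Z).reverse := by rw [← h2, List.reverse_reverse]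
                rw [this, List.reverse_append, hT]
              · have : Y = (Z ++ S).reverse := by rw [← h1, List.reverse_reverse]
                rw [this, List.reverse_append, hS]
            · -- Y.reverse = S ++ Z, X.reverse = Z ++ T : case 3
              refine Or.inr (Or.inr (Or.inl ⟨T, S, Z.reverse, hT, hS, ?_, ?_⟩))
              · have : X = (Z ++ T).reverse := by rw [← h2, List.reverse_reverse]
                rw [this, List.reverse_append, hT]
              · have : Y = (S ++ Z).reverse := by rw [← h1, List.reverse_reverse]
                rw [this, List.reverse_append, hS]
            · -- X.reverse = S ++ Y.reverse ++ T : case 1 X = T ++ Y ++ S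
              refine Or.inl ⟨T, S, hT, hS, ?_⟩
              have hS' : S.reverse = S := hS
              have hT' : T.reverse = T := hT
              have : X = (S ++ Y.reverse ++ T).reverse := by
                rw [← hEq, List.reverse_reverse]
              rw [this]; simp [List.reverse_append, hS', hT']
        · -- A.reverse = Y ++ B, X = D ++ A.reverse : case 1
          refine Or.inl ⟨D, B, hD, hB, ?_⟩
          rw [hX1, hA1r, ← List.append_assoc]

theorem stmt6 {α : Type*} (P Q X Y : List α) (hP : Pal P) (hQ : Pal Q)
    (h : P ++ X = Y ++ Q) :
    (∃ S T : List α, Pal S ∧ Pal T ∧ X = S ++ Y ++ T) ∨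
    (∃ S T Z : List α, Pal S ∧ Pal T ∧ X = Z ++ S ∧ Y = T ++ Z) ∨
    (∃ S T Z : List α, Pal S ∧ Pal T ∧ X = S ++ Z ∧ Y = Z ++ T) ∨
    (∃ S T : List α, Pal S ∧ Pal T ∧ Y = S ++ X ++ T) :=
  main_aux (P.length + Q.length) P Q X Y le_rfl hP hQ h
end

section
/- If XPY = Q for palindromes P and Q and words X, Y, then either X = reverse(Y)·S·T or Y = S·T·reverse(X) for some palindromes S and T. -/
lemma key_pal {α : Type*} : ∀ n (P Z : List α), P.length ≤ n → P.reverse = P →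
    Z ++ P = P ++ Z.reverse → ∃ S T : List α, Pal S ∧ Pal T ∧ Z = S ++ T := by
  intro n
  induction n with
  | zero =>
    intro P Z hn hP h
    have hP0 : P = [] := List.eq_nil_of_length_eq_zero (Nat.le_zero.mp hn)
    subst hP0
    simp at h
    exact ⟨Z, [], h.symm, rfl, by simp⟩
  | succ n ih =>
    intro P Z hn hP h
    rcases List.append_eq_append_iff.mp h with ⟨W, hW1, hW2⟩ | ⟨c, hc1, hc2⟩
    · -- P = Z ++ W, P = W ++ Z.reverse
      rcases eq_or_ne Z [] with rfl | hZ
      · exact ⟨[], [], rfl, rfl, by simp⟩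
      · have heq : Z ++ W = W ++ Z.reverse := by rw [← hW1, ← hW2]
        have hWpal : W.reverse = W := by
          have h1 : W.reverse ++ Z.reverse = W ++ Z.reverse := by
            calc W.reverse ++ Z.reverse = (Z ++ W).reverse := by simp
            _ = P.reverse := by rw [← hW1]
            _ = P := hP
            _ = W ++ Z.reverse := hW2
          exact List.append_cancel_right h1
        have hlen : W.length ≤ n := by
          have : Z.length + W.length = P.length := by rw [hW1]; simp
          have hZpos : 1 ≤ Z.length := List.length_pos_iff.mpr hZ
          omega
        obtain ⟨S, T, hS, hT, hST⟩ := ih W Z hlen hWpal heq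
        exact ⟨S, T, hS, hT, hST⟩
    · -- Z = P ++ c, Z.reverse = c ++ P
      have hcpal : c.reverse = c := by
        have h1 : c.reverse ++ P = c ++ P := by
          calc c.reverse ++ P = c.reverse ++ P.reverse := by rw [hP]
          _ = (P ++ c).reverse := by simp
          _ = Z.reverse := by rw [← hc1]
          _ = c ++ P := hc2
        exact List.append_cancel_right h1
      exact ⟨P, c, hP, hcpal, hc1⟩

theorem stmt7 {α : Type*} (X Y P Q : List α) (hP : Pal P) (hQ : Pal Q)
    (h : X ++ P ++ Y = Q) :
    (∃ S T : List α, Pal S ∧ Pal T ∧ X = Y.reverse ++ S ++ T) ∨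
    (∃ S T : List α, Pal S ∧ Pal T ∧ Y = S ++ T ++ X.reverse) := by
  have hmain : X ++ (P ++ Y) = Y.reverse ++ (P ++ X.reverse) := by
    have h2 : (X ++ P ++ Y).reverse = X ++ P ++ Y := by rw [h]; exact hQ
    have h3 : (X ++ P ++ Y).reverse = Y.reverse ++ (P ++ X.reverse) := by
      simp [List.reverse_append, hP, List.append_assoc]
      rw [hP]
    rw [← List.append_assoc, ← h3, h2, List.append_assoc]
  rcases List.append_eq_append_iff.mp hmain with ⟨a, ha1, ha2⟩ | ⟨c, hc1, hc2⟩
  · -- Y.reverse = X ++ a, P ++ Y = a ++ (P ++ X.reverse)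
    right
    have hY : Y = a.reverse ++ X.reverse := by
      have := congrArg List.reverse ha1
      simpa using this
    have heq : a ++ P = P ++ a.reverse := by
      have h4 : P ++ (a.reverse ++ X.reverse) = a ++ (P ++ X.reverse) := by rw [← hY]; exact ha2
      have h5 : (P ++ a.reverse) ++ X.reverse = (a ++ P) ++ X.reverse := by
        simpa [List.append_assoc] using h4
      exact (List.append_cancel_right h5).symm
    obtain ⟨S, T, hS, hT, hST⟩ := key_pal P.length P a le_rfl hP heq
    refine ⟨T, S, hT, hS, ?_⟩
    rw [hY, hST]
    simp only [List.reverse_append, List.append_assoc]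
    rw [hS, hT]
  · -- X = Y.reverse ++ c, P ++ X.reverse = c ++ (P ++ Y)
    left
    have hXr : X.reverse = c.reverse ++ Y := by
      have := congrArg List.reverse hc1
      simpa using this
    have heq : c ++ P = P ++ c.reverse := by
      have h4 : P ++ (c.reverse ++ Y) = c ++ (P ++ Y) := by rw [← hXr]; exact hc2
      have h5 : (P ++ c.reverse) ++ Y = (c ++ P) ++ Y := by
        simpa [List.append_assoc] using h4
      exact (List.append_cancel_right h5).symm
    obtain ⟨S, T, hS, hT, hST⟩ := key_pal P.length P c le_rfl hP heq
    exact ⟨S, T, hS, hT, by rw [hc1, hST, List.append_assoc]⟩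
end

section
/- If XPY = QZ for palindromes P, Q and words X, Y, Z, then there exist palindromes S, T and possibly a word F such that one of the following holds: (1) X = reverse(F)·ST and Y = FZ; (2) Y = ST·reverse(X)·Z; (3) Z = SXTY; (4) X = SF and Z = FTY; (5) X = FS and Z = TFY; (6) X = SFT and Z = FY. -/
lemma pal_nil {α : Type*} : Pal ([] : List α) := rfl

lemma palSplit {α : Type*} {X U : List α} (h : Pal (X ++ U)) :
    (∃ M, Pal M ∧ X = U.reverse ++ M) ∨ (∃ M, Pal M ∧ U = M ++ X.reverse) := by
  have h0 : (X ++ U).reverse = X ++ U := h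
  have h' : U.reverse ++ X.reverse = X ++ U := by
    simpa [List.reverse_append] using h0
  rcases List.append_eq_append_iff.mp h' with ⟨a, ha1, ha2⟩ | ⟨c, hc1, hc2⟩
  · left
    refine ⟨a, ?_, ha1⟩
    have h3 : X.reverse = a.reverse ++ U := by rw [ha1]; simp [List.reverse_append]
    have := h3.symm.trans ha2
    exact List.append_cancel_right this
  · right
    refine ⟨c, ?_, hc2⟩
    have h3 : U.reverse = X ++ c.reverse := by rw [hc2]; simp [List.reverse_append]
    have := h3.symm.trans hc1
    exact List.append_cancel_left this

lemma lemK {α : Type*} : ∀ (n : ℕ) (U X V : List α), U.length ≤ n →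
    Pal (X ++ U) → Pal (U ++ V) →
    (∃ S T, Pal S ∧ Pal T ∧ V = S ++ X ++ T) ∨
    (∃ S T F, Pal S ∧ Pal T ∧ X = S ++ F ∧ V = F ++ T) ∨
    (∃ S T F, Pal S ∧ Pal T ∧ X = F ++ S ∧ V = T ++ F) ∨
    (∃ S T F, Pal S ∧ Pal T ∧ X = S ++ F ++ T ∧ V = F) := by
  intro n
  induction n with
  | zero =>
    intro U X V hn h1 h2
    have hU : U = [] := List.eq_nil_of_length_eq_zero (Nat.le_zero.mp hn)
    subst hU
    simp only [List.append_nil] at h1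
    simp only [List.nil_append] at h2
    exact Or.inr (Or.inl ⟨X, V, [], h1, h2, by simp, by simp⟩)
  | succ n ih =>
    intro U X V hn h1 h2
    by_cases hXV : X = [] ∧ V = []
    · exact Or.inl ⟨[], [], pal_nil, pal_nil, by simp [hXV.1, hXV.2]⟩
    rcases palSplit h1 with ⟨M, hM, hXe⟩ | ⟨M, hM, hUe⟩
    · rcases palSplit h2 with ⟨N, hN, hUe⟩ | ⟨N, hN, hVe⟩
      · -- X = rev U ++ M, U = rev V ++ N : case (6')
        have hN' : N.reverse = N := hN
        refine Or.inr (Or.inr (Or.inr ⟨N, M, V, hN, hM, ?_, rfl⟩))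
        rw [hXe, hUe]
        simp [List.reverse_append, hN']
      · -- X = rev U ++ M, V = N ++ rev U : case (5') with F = rev U
        exact Or.inr (Or.inr (Or.inl ⟨M, N, U.reverse, hM, hN, hXe, hVe⟩))
    · rcases palSplit h2 with ⟨N, hN, hUe2⟩ | ⟨N, hN, hVe⟩
      · -- U = M ++ rev X and U = rev V ++ N
        have hM' : M.reverse = M := hM
        have hN' : N.reverse = N := hN
        have heq : M ++ X.reverse = V.reverse ++ N := hUe.symm.trans hUe2
        rcases List.append_eq_append_iff.mp heq with ⟨a, ha1, ha2⟩ | ⟨G, hG1, hG2⟩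
        · -- rev V = M ++ a, rev X = a ++ N : case (4')
          have hX : X = N ++ a.reverse := by
            have : X.reverse.reverse = (a ++ N).reverse := by rw [ha2]
            simpa [List.reverse_append, hN'] using this
          have hV : V = a.reverse ++ M := by
            have : V.reverse.reverse = (M ++ a).reverse := by rw [ha1]
            simpa [List.reverse_append, hM'] using this
          exact Or.inr (Or.inl ⟨N, M, a.reverse, hN, hM, hX, hV⟩)
        · -- M = rev V ++ G, N = G ++ rev X : recurse
          have hNN : X ++ G.reverse = G ++ X.reverse := by
            have h4 : (G ++ X.reverse).reverse = G ++ X.reverse := by rw [← hG2]; exact hN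
            simpa [List.reverse_append] using h4
          have hMM : G.reverse ++ V = V.reverse ++ G := by
            have h4 : (V.reverse ++ G).reverse = V.reverse ++ G := by rw [← hG1]; exact hM
            simpa [List.reverse_append] using h4
          have p1 : Pal (X ++ G.reverse) := by
            show (X ++ G.reverse).reverse = X ++ G.reverse
            rw [List.reverse_append, List.reverse_reverse]
            exact hNN.symm
          have p2 : Pal (G.reverse ++ V) := by
            show (G.reverse ++ V).reverse = G.reverse ++ V
            rw [List.reverse_append, List.reverse_reverse]
            exact hMM.symm
          have hlen : G.reverse.length ≤ n := by
            have hU1 : U.length = M.length + X.length := by rw [hUe]; simp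
            have hM1 : M.length = V.length + G.length := by rw [hG1]; simp
            have hpos : 1 ≤ X.length + V.length := by
              rcases not_and_or.mp hXV with hx | hv
              · have := List.length_pos_iff.mpr hx
                omega
              · have := List.length_pos_iff.mpr hv
                omega
            simp only [List.length_reverse]
            omega
          exact ih G.reverse X V hlen p1 p2
      · -- U = M ++ rev X, V = N ++ rev U : case (3')
        have hM' : M.reverse = M := hM
        refine Or.inl ⟨N, M, hN, hM, ?_⟩
        rw [hVe, hUe]
        simp [List.reverse_append, hM']

lemma palPairL {α : Type*} {A P : List α} (h : Pal (A ++ P)) (hP : Pal P) :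
    ∃ S T, Pal S ∧ Pal T ∧ A = S ++ T := by
  have h2 : Pal (P ++ ([] : List α)) := by
    show (P ++ ([] : List α)).reverse = P ++ []
    simpa using (show P.reverse = P from hP)
  rcases lemK P.length P A [] le_rfl h h2 with
    ⟨S, T, hS, hT, hA⟩ | ⟨S, T, F, hS, hT, hA, hV⟩ | ⟨S, T, F, hS, hT, hA, hV⟩ |
    ⟨S, T, F, hS, hT, hA, hV⟩
  · have := hA.symm
    simp only [List.append_eq_nil_iff] at this
    exact ⟨[], [], pal_nil, pal_nil, by simp [this.1.2]⟩
  · have := hV.symm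
    simp only [List.append_eq_nil_iff] at this
    exact ⟨S, [], hS, pal_nil, by simp [hA, this.1]⟩
  · have := hV.symm
    simp only [List.append_eq_nil_iff] at this
    exact ⟨[], S, pal_nil, hS, by simp [hA, this.2]⟩
  · exact ⟨S, T, hS, hT, by simp [hA, ← hV]⟩

lemma palPairR {α : Type*} {A P : List α} (h : Pal (P ++ A)) (hP : Pal P) :
    ∃ S T, Pal S ∧ Pal T ∧ A = S ++ T := by
  have h1 : Pal (([] : List α) ++ P) := by
    show (([] : List α) ++ P).reverse = [] ++ P
    simpa using (show P.reverse = P from hP)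
  rcases lemK P.length P [] A le_rfl h1 h with
    ⟨S, T, hS, hT, hA⟩ | ⟨S, T, F, hS, hT, hX, hA⟩ | ⟨S, T, F, hS, hT, hX, hA⟩ |
    ⟨S, T, F, hS, hT, hX, hA⟩
  · exact ⟨S, T, hS, hT, by simpa using hA⟩
  · have := hX.symm
    simp only [List.append_eq_nil_iff] at this
    exact ⟨[], T, pal_nil, hT, by simp [hA, this.2]⟩
  · have := hX.symm
    simp only [List.append_eq_nil_iff] at this
    exact ⟨T, [], hT, pal_nil, by simp [hA, this.1]⟩
  · have := hX.symm
    simp only [List.append_eq_nil_iff] at this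
    exact ⟨[], [], pal_nil, pal_nil, by simp [hA, this.1.2]⟩

theorem stmt8 {α : Type*} (X Y Z P Q : List α) (hP : Pal P) (hQ : Pal Q)
    (h : X ++ P ++ Y = Q ++ Z) :
    (∃ S T F : List α, Pal S ∧ Pal T ∧ X = F.reverse ++ S ++ T ∧ Y = F ++ Z) ∨
    (∃ S T : List α, Pal S ∧ Pal T ∧ Y = S ++ T ++ X.reverse ++ Z) ∨
    (∃ S T : List α, Pal S ∧ Pal T ∧ Z = S ++ X ++ T ++ Y) ∨
    (∃ S T F : List α, Pal S ∧ Pal T ∧ X = S ++ F ∧ Z = F ++ T ++ Y) ∨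
    (∃ S T F : List α, Pal S ∧ Pal T ∧ X = F ++ S ∧ Z = T ++ F ++ Y) ∨
    (∃ S T F : List α, Pal S ∧ Pal T ∧ X = S ++ F ++ T ∧ Z = F ++ Y) := by
  have hP' : P.reverse = P := hP
  have h' : X ++ (P ++ Y) = Q ++ Z := by rw [← List.append_assoc]; exact h
  rcases List.append_eq_append_iff.mp h' with ⟨U, hQe, hPY⟩ | ⟨c, hXe, hZe⟩
  · -- Q = X ++ U, P ++ Y = U ++ Z
    rcases List.append_eq_append_iff.mp hPY with ⟨W, hUe, hYe⟩ | ⟨V, hPe, hZe⟩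
    · -- U = P ++ W, Y = W ++ Z ; Q = X ++ P ++ W palindrome
      have hQ2 : (X ++ (P ++ W)).reverse = X ++ (P ++ W) := by
        rw [← hUe, ← hQe]; exact hQ
      have hq : W.reverse ++ (P.reverse ++ X.reverse) = X ++ (P ++ W) := by
        simpa [List.reverse_append, List.append_assoc] using hQ2
      rcases List.append_eq_append_iff.mp hq with ⟨A, hA1, hA2⟩ | ⟨B, hB1, hB2⟩
      · -- X = rev W ++ A
        have hXr : X.reverse = A.reverse ++ W := by rw [hA1]; simp [List.reverse_append]
        have key : (P.reverse ++ A.reverse) ++ W = (A ++ P) ++ W := by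
          have := hA2
          rw [hXr] at this
          simpa [List.append_assoc] using this
        have hAP : Pal (A ++ P) := by
          show (A ++ P).reverse = A ++ P
          rw [List.reverse_append]
          exact List.append_cancel_right key
        obtain ⟨S, T, hS, hT, hAe⟩ := palPairL hAP hP
        refine Or.inl ⟨S, T, W, hS, hT, ?_, by rw [hYe]⟩
        rw [hA1, hAe]
        simp [List.append_assoc]
      · -- rev W = X ++ B
        have hW : W = B.reverse ++ X.reverse := by
          have : W.reverse.reverse = (X ++ B).reverse := by rw [hB1]
          simpa [List.reverse_append] using this
        have key : (P ++ B.reverse) ++ X.reverse = (B ++ P.reverse) ++ X.reverse := by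
          have := hB2
          rw [hW] at this
          simpa [List.append_assoc] using this
        have key2 : P ++ B.reverse = B ++ P.reverse := List.append_cancel_right key
        have hPB : Pal (P ++ B.reverse) := by
          show (P ++ B.reverse).reverse = P ++ B.reverse
          rw [List.reverse_append, List.reverse_reverse, hP']
          rw [hP'] at key2
          exact key2.symm
        obtain ⟨S, T, hS, hT, hBe⟩ := palPairR hPB hP
        refine Or.inr (Or.inl ⟨S, T, hS, hT, ?_⟩)
        rw [hYe, hW, hBe]
    · -- P = U ++ V, Z = V ++ Y
      have h1 : Pal (X ++ U) := by rw [← hQe]; exact hQ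
      have h2 : Pal (U ++ V) := by rw [← hPe]; exact hP
      rcases lemK U.length U X V le_rfl h1 h2 with
        ⟨S, T, hS, hT, hV⟩ | ⟨S, T, F, hS, hT, hX, hV⟩ | ⟨S, T, F, hS, hT, hX, hV⟩ |
        ⟨S, T, F, hS, hT, hX, hV⟩
      · exact Or.inr (Or.inr (Or.inl ⟨S, T, hS, hT,
          by rw [hZe, hV]⟩))
      · exact Or.inr (Or.inr (Or.inr (Or.inl ⟨S, T, F, hS, hT, hX,
          by rw [hZe, hV]⟩)))
      · exact Or.inr (Or.inr (Or.inr (Or.inr (Or.inl ⟨S, T, F, hS, hT, hX,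
          by rw [hZe, hV]⟩))))
      · exact Or.inr (Or.inr (Or.inr (Or.inr (Or.inr ⟨S, T, F, hS, hT, hX,
          by rw [hZe, hV]⟩))))
  · -- X = Q ++ c, Z = c ++ (P ++ Y)
    exact Or.inr (Or.inr (Or.inr (Or.inl ⟨Q, P, c, hQ, hP, hXe,
      by rw [hZe]; simp [List.append_assoc]⟩)))
end

section
/- If PXQ = R for palindromes P, Q, R and a word X, then X is a concatenation of at most three palindromes. -/
lemma rev_eq_of_pals {α : Type*} {a b : List α} (ha : Pal a) (hb : Pal b) :
    (a ++ b).reverse = b ++ a := by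
  have ha' : a.reverse = a := ha
  have hb' : b.reverse = b := hb
  rw [List.reverse_append, ha', hb']

lemma lemD {α : Type*} : ∀ (n : ℕ) (x z : List α), z.length ≤ n →
    x ++ z = z ++ x.reverse → ∃ u v, Pal u ∧ Pal v ∧ x = u ++ v := by
  intro n
  induction n with
  | zero =>
    intro x z hz h
    have hzn : z = [] := List.eq_nil_of_length_eq_zero (Nat.le_zero.mp hz)
    subst hzn
    simp at h
    exact ⟨x, [], h.symm, rfl, by simp⟩
  | succ n ih =>
    intro x z hz h
    rcases List.append_eq_append_iff.mp h with ⟨w, hw1, hw2⟩ | ⟨w, hw1, hw2⟩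
    · -- z = x ++ w, z = w ++ x.reverse
      rcases eq_or_ne x [] with hx | hx
      · exact ⟨[], [], rfl, rfl, by simp [hx]⟩
      · have h2 : x ++ w = w ++ x.reverse := by rw [← hw1, hw2]
        have hlen : w.length ≤ n := by
          have h3 : z.length = x.length + w.length := by rw [hw1]; simp
          have hx1 : 1 ≤ x.length := by
            cases x with
            | nil => exact absurd rfl hx
            | cons a l => simp
          omega
        exact ih x w hlen h2
    · -- x = z ++ w, x.reverse = w ++ z
      have hrev : x.reverse = w.reverse ++ z.reverse := by rw [hw1]; simp
      have h3 : w.reverse ++ z.reverse = w ++ z := by rw [← hrev, hw2]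
      have h4 := List.append_inj h3 (by simp)
      exact ⟨z, w, h4.2, h4.1, hw1⟩

lemma lemKL {α : Type*} : ∀ (n : ℕ) (P X u v : List α), u.length + v.length ≤ n →
    Pal P → Pal u → Pal v → P ++ X = u ++ v →
    ∃ S T U : List α, Pal S ∧ Pal T ∧ Pal U ∧ X = S ++ T ++ U := by
  intro n
  induction n with
  | zero =>
    intro P X u v hn hP hu hv h
    have hu0 : u = [] := List.eq_nil_of_length_eq_zero (by omega)
    have hv0 : v = [] := List.eq_nil_of_length_eq_zero (by omega)
    subst hu0; subst hv0
    simp at h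
    exact ⟨[], [], [], rfl, rfl, rfl, by simp [h.2]⟩
  | succ n ih =>
    intro P X u v hn hP hu hv h
    rcases eq_or_ne u [] with hu0 | hu0
    · -- v = P ++ X, Pal v
      subst hu0
      simp at h
      have hP' : P.reverse = P := hP
      have hv' : v.reverse = v := hv
      rw [← h, List.reverse_append, hP'] at hv'
      -- hv' : X.reverse ++ P = P ++ X
      have h2 : X.reverse ++ P = P ++ X.reverse.reverse := by simpa using hv'
      obtain ⟨a, b, ha, hb, hab⟩ := lemD P.length X.reverse P le_rfl h2
      refine ⟨[], b, a, rfl, hb, ha, ?_⟩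
      have hX : X = b ++ a := by
        have : X.reverse.reverse = (a ++ b).reverse := by rw [hab]
        simpa [rev_eq_of_pals ha hb] using this
      simpa using hX
    · rcases List.append_eq_append_iff.mp h with ⟨A, hA1, hA2⟩ | ⟨B, hB1, hB2⟩
      · -- u = P ++ A, X = A ++ v
        have hP' : P.reverse = P := hP
        have hu' : u.reverse = u := hu
        rw [hA1, List.reverse_append, hP'] at hu'
        -- hu' : A.reverse ++ P = P ++ A
        have h2 : A.reverse ++ P = P ++ A.reverse.reverse := by simpa using hu'
        obtain ⟨a, b, ha, hb, hab⟩ := lemD P.length A.reverse P le_rfl h2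
        have hA : A = b ++ a := by
          have : A.reverse.reverse = (a ++ b).reverse := by rw [hab]
          simpa [rev_eq_of_pals ha hb] using this
        exact ⟨b, a, v, hb, ha, hv, by rw [hA2, hA, List.append_assoc]⟩
      · -- P = u ++ B, v = B ++ X
        have hP' : P.reverse = P := hP
        have hu' : u.reverse = u := hu
        rw [hB1, List.reverse_append, hu'] at hP'
        -- hP' : B.reverse ++ u = u ++ B
        have h2 : B.reverse ++ u = u ++ B.reverse.reverse := by simpa using hP'
        obtain ⟨s, t, hs, ht, hst⟩ := lemD u.length B.reverse u le_rfl h2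
        have hB : B = t ++ s := by
          have : B.reverse.reverse = (s ++ t).reverse := by rw [hst]
          simpa [rev_eq_of_pals hs ht] using this
        -- v = t ++ (s ++ X), Pal v
        have hv2 : t ++ (s ++ X) = v := by rw [hB2, hB, List.append_assoc]
        have hv' : v.reverse = v := hv
        have ht' : t.reverse = t := ht
        rw [← hv2, List.reverse_append, ht'] at hv'
        -- hv' : (s ++ X).reverse ++ t = t ++ (s ++ X)
        have h3 : (s ++ X).reverse ++ t = t ++ (s ++ X).reverse.reverse := by
          simpa using hv'
        obtain ⟨a, b, ha, hb, hab⟩ := lemD t.length (s ++ X).reverse t le_rfl h3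
        have h4 : s ++ X = b ++ a := by
          have : (s ++ X).reverse.reverse = (a ++ b).reverse := by rw [hab]
          simpa [rev_eq_of_pals ha hb] using this
        have hlen : b.length + a.length ≤ n := by
          have e1 := congrArg List.length h4
          have e2 := congrArg List.length hv2
          have e3 : 1 ≤ u.length := by
            cases u with
            | nil => exact absurd rfl hu0
            | cons c l => simp
          simp [List.length_append] at e1 e2
          omega
        exact ih s X b a hlen hs hb ha h4

theorem stmt9 {α : Type*} (P Q R X : List α) (hP : Pal P) (hQ : Pal Q) (hR : Pal R)
    (h : P ++ X ++ Q = R) :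
    ∃ S T U : List α, Pal S ∧ Pal T ∧ Pal U ∧ X = S ++ T ++ U := by
  have hP' : P.reverse = P := hP
  have hQ' : Q.reverse = Q := hQ
  have hR' : R.reverse = R := hR
  rw [← h] at hR'
  simp only [List.reverse_append, hP', hQ'] at hR'
  -- hR' : Q ++ (X.reverse ++ P) = P ++ X ++ Q
  have key : (P ++ X) ++ Q = Q ++ (P ++ X).reverse := by
    rw [List.reverse_append, hP', List.append_assoc]
    rw [hR']
    simp [List.append_assoc]
  obtain ⟨u, v, hu, hv, huv⟩ := lemD Q.length (P ++ X) Q le_rfl key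
  exact lemKL (u.length + v.length) P X u v le_rfl hP hu hv huv
end

section
/- If PX = QYR for palindromes P, Q, R and words X, Y, then there exist palindromes S, T, U and possibly a word Z such that one of the following holds: (1) X = STYU; (2) X = SZT and Y = UZ; (3) X = ZS and Y = TUZ; (4) X = SZ and Y = TZU; (5) Y = STXU; (6) X = STZ and Y = ZU. -/
namespace PalAux

variable {α : Type*}

lemma pal_nil : Pal ([] : List α) := rfl

lemma key : ∀ (n : ℕ) (C A : List α), C.length ≤ n → A.reverse ++ C = C ++ A →
    ∃ u v, Pal u ∧ Pal v ∧ A = u ++ v := by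
  intro n
  induction n with
  | zero =>
    intro C A hC h
    have hCnil : C = [] := List.eq_nil_of_length_eq_zero (Nat.le_zero.mp hC)
    subst hCnil
    simp only [List.append_nil, List.nil_append] at h
    exact ⟨A, [], h, rfl, by simp⟩
  | succ n ih =>
    intro C A hC h
    rcases eq_or_ne A [] with rfl | hA
    · exact ⟨[], [], rfl, rfl, by simp⟩
    rcases List.append_eq_append_iff.mp h with ⟨m, h1, h2⟩ | ⟨m, h1, h2⟩
    · -- h1 : C = A.reverse ++ m, h2 : C = m ++ A
      have hAlen : 1 ≤ A.length := by
        cases A with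
        | nil => exact absurd rfl hA
        | cons x xs => simp
      have hlen : m.length ≤ n := by
        have e1 := congrArg List.length h1
        simp only [List.length_append, List.length_reverse] at e1
        omega
      exact ih m A hlen (h1.symm.trans h2)
    · -- h1 : A.reverse = C ++ m, h2 : A = m ++ C
      have e1 : C.reverse ++ m.reverse = C ++ m := by
        have := congrArg List.reverse h2
        rw [List.reverse_append] at this
        exact this.symm.trans h1
      have e2 := List.append_inj e1 (by simp)
      exact ⟨m, C, e2.2, e2.1, h2⟩

lemma palapp {P A : List α} (hP : Pal P) (h : Pal (P ++ A)) :
    ∃ u v, Pal u ∧ Pal v ∧ A = u ++ v := by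
  apply key P.length P A le_rfl
  have h' := h
  rw [Pal, List.reverse_append, hP] at h'
  exact h'

lemma palsuff {C M : List α} (hC : Pal C) (h : Pal (M ++ C)) :
    ∃ c d, Pal c ∧ Pal d ∧ M = c ++ d := by
  have h2 : M.reverse.reverse ++ C = C ++ M.reverse := by
    rw [List.reverse_reverse]
    have h' := h
    rw [Pal, List.reverse_append, hC] at h'
    exact h'.symm
  obtain ⟨u, v, hu, hv, huv⟩ := key C.length C M.reverse le_rfl h2
  refine ⟨v, u, hv, hu, ?_⟩
  conv_lhs => rw [← List.reverse_reverse M]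
  rw [huv, List.reverse_append, hu, hv]

lemma split {Y t : List α} (h : Pal (Y ++ t)) :
    (∃ w, Pal w ∧ t.reverse = Y ++ w) ∨ (∃ q, Pal q ∧ Y = t.reverse ++ q) := by
  have h' : t.reverse ++ Y.reverse = Y ++ t := by
    have h0 := h
    rwa [Pal, List.reverse_append] at h0
  rcases List.append_eq_append_iff.mp h' with ⟨m, h1, h2⟩ | ⟨m, h1, h2⟩
  · -- h1 : Y = t.reverse ++ m, h2 : Y.reverse = m ++ t
    right
    refine ⟨m, ?_, h1⟩
    have e1 : m.reverse ++ t = m ++ t := by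
      have := congrArg List.reverse h1
      rw [List.reverse_append, List.reverse_reverse] at this
      exact this.symm.trans h2
    exact List.append_cancel_right e1
  · -- h1 : t.reverse = Y ++ m, h2 : t = m ++ Y.reverse
    left
    refine ⟨m, ?_, h1⟩
    have e1 : m.reverse ++ Y.reverse = m ++ Y.reverse := by
      have := congrArg List.reverse h1
      rw [List.reverse_append, List.reverse_reverse] at this
      exact this.symm.trans h2
    exact List.append_cancel_right e1

def Goal (X Y : List α) : Prop :=
    (∃ S T U : List α, Pal S ∧ Pal T ∧ Pal U ∧ X = S ++ T ++ Y ++ U) ∨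
    (∃ S T U Z : List α, Pal S ∧ Pal T ∧ Pal U ∧ X = S ++ Z ++ T ∧ Y = U ++ Z) ∨
    (∃ S T U Z : List α, Pal S ∧ Pal T ∧ Pal U ∧ X = Z ++ S ∧ Y = T ++ U ++ Z) ∨
    (∃ S T U Z : List α, Pal S ∧ Pal T ∧ Pal U ∧ X = S ++ Z ∧ Y = T ++ Z ++ U) ∨
    (∃ S T U : List α, Pal S ∧ Pal T ∧ Pal U ∧ Y = S ++ T ++ X ++ U) ∨
    (∃ S T U Z : List α, Pal S ∧ Pal T ∧ Pal U ∧ X = S ++ T ++ Z ∧ Y = Z ++ U)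

lemma lemW {b c d Y₂ X : List α} (hb : Pal b) (hc : Pal c) (hd : Pal d)
    (h : Y₂ ++ X.reverse = c ++ d) : Goal X (b ++ Y₂) := by
  rcases List.append_eq_append_iff.mp h with ⟨g, h1, h2⟩ | ⟨g, h1, h2⟩
  · -- h1 : c = Y₂ ++ g, h2 : X.reverse = g ++ d
    have hx : X = d ++ g.reverse := by
      have := congrArg List.reverse h2
      rw [List.reverse_reverse, List.reverse_append, hd] at this
      exact this
    rcases split (show Pal (Y₂ ++ g) from h1 ▸ hc) with ⟨w, hw, hw2⟩ | ⟨q, hq, hq2⟩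
    · -- hw2 : g.reverse = Y₂ ++ w : case 2
      refine Or.inr (Or.inl ⟨d, w, b, Y₂, hd, hw, hb, ?_, rfl⟩)
      rw [hx, hw2]; try simp [List.append_assoc]
    · -- hq2 : Y₂ = g.reverse ++ q : case 4
      refine Or.inr (Or.inr (Or.inr (Or.inl ⟨d, b, q, g.reverse, hd, hb, hq, hx, ?_⟩)))
      rw [hq2]; try simp [List.append_assoc]
  · -- h1 : Y₂ = c ++ g, h2 : d = g ++ X.reverse
    rcases split (show Pal (g ++ X.reverse) from h2 ▸ hd) with ⟨w, hw, hw2⟩ | ⟨q, hq, hq2⟩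
    · -- hw2 : X.reverse.reverse = g ++ w : case 3
      rw [List.reverse_reverse] at hw2
      refine Or.inr (Or.inr (Or.inl ⟨w, b, c, g, hw, hb, hc, hw2, ?_⟩))
      rw [h1]; try simp [List.append_assoc]
    · -- hq2 : g = X.reverse.reverse ++ q : case 5
      rw [List.reverse_reverse] at hq2
      refine Or.inr (Or.inr (Or.inr (Or.inr (Or.inl ⟨b, c, q, hb, hc, hq, ?_⟩))))
      rw [h1, hq2]; try simp [List.append_assoc]

lemma lemK {b c d Y m X : List α} (hb : Pal b) (hc : Pal c) (hd : Pal d)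
    (hbm : b = Y ++ m) (hx : X.reverse = m ++ (c ++ d)) : Goal X Y := by
  have hX : X = d ++ c ++ m.reverse := by
    have := congrArg List.reverse hx
    rw [List.reverse_reverse, List.reverse_append, List.reverse_append, hc, hd] at this
    rw [this]; try simp [List.append_assoc]
  rcases split (show Pal (Y ++ m) from hbm ▸ hb) with ⟨w, hw, hw2⟩ | ⟨q, hq, hq2⟩
  · -- hw2 : m.reverse = Y ++ w : case 1
    refine Or.inl ⟨d, c, w, hd, hc, hw, ?_⟩
    rw [hX, hw2]; try simp [List.append_assoc]
  · -- hq2 : Y = m.reverse ++ q : case 6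
    refine Or.inr (Or.inr (Or.inr (Or.inr (Or.inr ⟨d, c, q, m.reverse, hd, hc, hq, ?_, hq2⟩))))
    rw [hX]; try simp [List.append_assoc]

lemma lemT : ∀ (μ : ℕ) (C b a Y X : List α),
    C.length + b.length + a.length ≤ μ → Pal C → Pal b → Pal a →
    Y ++ X.reverse ++ C = b ++ a → Goal X Y := by
  intro μ
  induction μ with
  | zero =>
    intro C b a Y X hμ hC hb ha h
    have hanil : a = [] := List.eq_nil_of_length_eq_zero (by omega)
    have hbnil : b = [] := List.eq_nil_of_length_eq_zero (by omega)
    have hCnil : C = [] := List.eq_nil_of_length_eq_zero (by omega)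
    subst hanil; subst hbnil; subst hCnil
    have h2 : Y ++ X.reverse = [] := by simpa using h
    obtain ⟨hY, hXr⟩ := List.append_eq_nil_iff.mp h2
    have hX : X = [] := by simpa using hXr
    subst hY; subst hX
    exact Or.inr (Or.inl ⟨[], [], [], [], rfl, rfl, rfl, by simp, by simp⟩)
  | succ n ih =>
    intro C b a Y X hμ hC hb ha h
    have h' : (Y ++ X.reverse) ++ C = b ++ a := by rw [← h]; try simp [List.append_assoc]
    rcases List.append_eq_append_iff.mp h' with ⟨m, h1, h2⟩ | ⟨m, h1, h2⟩
    · -- h1 : b = (Y ++ X.reverse) ++ m, h2 : C = m ++ a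
      rcases eq_or_ne a [] with rfl | hane
      · -- a = [] : C = m ; b = Y ++ X.reverse ++ C
        simp only [List.append_nil] at h2
        subst h2
        obtain ⟨c, d, hc, hd, hcd⟩ := palsuff hC (show Pal ((Y ++ X.reverse) ++ C) from h1 ▸ hb)
        have := lemW (b := []) pal_nil hc hd hcd
        simpa using this
      · -- a ≠ [] : recurse
        obtain ⟨e, f, he, hf, hef⟩ := palsuff ha (show Pal (m ++ a) from h2 ▸ hC)
        have hb' : Pal ((Y ++ X.reverse ++ e) ++ f) := by
          have : b = (Y ++ X.reverse ++ e) ++ f := by rw [h1, hef]; try simp [List.append_assoc]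
          exact this ▸ hb
        obtain ⟨c, d, hc, hd, hcd⟩ := palsuff hf hb'
        have heq : Y ++ X.reverse ++ e = c ++ d := hcd
        -- measure
        have l1 := congrArg List.length h2
        have l2 := congrArg List.length h1
        have l3 := congrArg List.length hef
        have l4 := congrArg List.length hcd
        simp only [List.length_append, List.length_reverse] at l1 l2 l3 l4
        have hapos : 1 ≤ a.length := by
          cases a with
          | nil => exact absurd rfl hane
          | cons x xs => simp
        exact ih e c d Y X (by omega) he hc hd heq
    · -- h1 : Y ++ X.reverse = b ++ m, h2 : a = m ++ C
      obtain ⟨c, d, hc, hd, hcd⟩ := palsuff hC (show Pal (m ++ C) from h2 ▸ ha)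
      subst hcd
      rcases List.append_eq_append_iff.mp h1 with ⟨m₂, g1, g2⟩ | ⟨Y₂, g1, g2⟩
      · -- g1 : b = Y ++ m₂, g2 : X.reverse = m₂ ++ (c ++ d)
        exact lemK hb hc hd g1 g2
      · -- g1 : Y = b ++ Y₂, g2 : c ++ d = Y₂ ++ X.reverse
        have := lemW hb hc hd g2.symm
        rwa [← g1] at this

end PalAux

open PalAux in
theorem stmt11 {α : Type*} (P Q R X Y : List α) (hP : Pal P) (hQ : Pal Q) (hR : Pal R)
    (h : P ++ X = Q ++ Y ++ R) :
    (∃ S T U : List α, Pal S ∧ Pal T ∧ Pal U ∧ X = S ++ T ++ Y ++ U) ∨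
    (∃ S T U Z : List α, Pal S ∧ Pal T ∧ Pal U ∧ X = S ++ Z ++ T ∧ Y = U ++ Z) ∨
    (∃ S T U Z : List α, Pal S ∧ Pal T ∧ Pal U ∧ X = Z ++ S ∧ Y = T ++ U ++ Z) ∨
    (∃ S T U Z : List α, Pal S ∧ Pal T ∧ Pal U ∧ X = S ++ Z ∧ Y = T ++ Z ++ U) ∨
    (∃ S T U : List α, Pal S ∧ Pal T ∧ Pal U ∧ Y = S ++ T ++ X ++ U) ∨
    (∃ S T U Z : List α, Pal S ∧ Pal T ∧ Pal U ∧ X = S ++ T ++ Z ∧ Y = Z ++ U) := by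
  show Goal X Y
  have h0 : P ++ X = Q ++ (Y ++ R) := by rw [h]; try simp [List.append_assoc]
  rcases List.append_eq_append_iff.mp h0 with ⟨A, h1, h2⟩ | ⟨W, h1, h2⟩
  · -- h1 : Q = P ++ A, h2 : X = A ++ (Y ++ R)
    obtain ⟨S, T, hS, hT, hST⟩ := palapp hP (show Pal (P ++ A) from h1 ▸ hQ)
    refine Or.inl ⟨S, T, R, hS, hT, hR, ?_⟩
    rw [h2, hST]; try simp [List.append_assoc]
  · -- h1 : P = Q ++ W, h2 : Y ++ R = W ++ X
    rcases List.append_eq_append_iff.mp h2 with ⟨B, g1, g2⟩ | ⟨m, g1, g2⟩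
    · -- g1 : W = Y ++ B, g2 : R = B ++ X   (hard case)
      obtain ⟨b, a, hbp, hap, hba⟩ := palapp hQ (show Pal (Q ++ W) from h1 ▸ hP)
      rw [g1] at hba  -- hba : Y ++ B = b ++ a
      rcases split (show Pal (B ++ X) from g2 ▸ hR) with ⟨w, hw, hw2⟩ | ⟨C, hCp, hC2⟩
      · -- hw2 : X.reverse = B ++ w, so X = w ++ B.reverse
        have hx : X = w ++ B.reverse := by
          have := congrArg List.reverse hw2
          rw [List.reverse_reverse, List.reverse_append, hw] at this
          exact this
        rcases List.append_eq_append_iff.mp hba with ⟨t, k1, k2⟩ | ⟨s, k1, k2⟩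
        · -- k1 : b = Y ++ t, k2 : B = t ++ a
          have hx2 : X = w ++ a ++ t.reverse := by
            rw [hx, k2, List.reverse_append, hap]; try simp [List.append_assoc]
          rcases split (show Pal (Y ++ t) from k1 ▸ hbp) with ⟨w₃, hw₃, hw₃2⟩ | ⟨q, hq, hq2⟩
          · -- hw₃2 : t.reverse = Y ++ w₃ : case 1
            refine Or.inl ⟨w, a, w₃, hw, hap, hw₃, ?_⟩
            rw [hx2, hw₃2]; try simp [List.append_assoc]
          · -- hq2 : Y = t.reverse ++ q : case 6
            refine Or.inr (Or.inr (Or.inr (Or.inr (Or.inr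
              ⟨w, a, q, t.reverse, hw, hap, hq, ?_, hq2⟩))))
            rw [hx2]; try simp [List.append_assoc]
        · -- k1 : Y = b ++ s, k2 : a = s ++ B
          rcases split (show Pal (s ++ B) from k2 ▸ hap) with ⟨w₂, hw₂, hw₂2⟩ | ⟨q, hq, hq2⟩
          · -- hw₂2 : B.reverse = s ++ w₂ : case 2
            refine Or.inr (Or.inl ⟨w, w₂, b, s, hw, hw₂, hbp, ?_, k1⟩)
            rw [hx, hw₂2]; try simp [List.append_assoc]
          · -- hq2 : s = B.reverse ++ q : case 4
            refine Or.inr (Or.inr (Or.inr (Or.inl ⟨w, b, q, B.reverse, hw, hbp, hq, hx, ?_⟩)))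
            rw [k1, hq2]; try simp [List.append_assoc]
      · -- hC2 : B = X.reverse ++ C : lemma T
        apply lemT (C.length + b.length + a.length) C b a Y X le_rfl hCp hbp hap
        rw [← hba, hC2]; try simp [List.append_assoc]
    · -- g1 : Y = W ++ m, g2 : X = m ++ R : case 3
      obtain ⟨T, U, hT, hU, hTU⟩ := palapp hQ (show Pal (Q ++ W) from h1 ▸ hP)
      refine Or.inr (Or.inr (Or.inl ⟨R, T, U, m, hR, hT, hU, g2, ?_⟩))
      rw [g1, hTU]; try simp [List.append_assoc]
end
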